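/- arXiv:2111.04251 — 2 statements merged into one kernel-verified Lean document; each statement's English description precedes it below -/
import Mathlib

section
/- Let α ∈ ℝ be irrational with continued-fraction denominators (q_n), let ω = (1, α), and let 𝒜 > 0, ϱ̃ ∈ ℝ. Suppose 0 < η ≤ 1/(4 q_n^{𝒜⁴}) and q_{n+l} ≤ q_n^{𝒜⁴} for some l ∈ ℕ. Then: (1) every k ∈ ℤ² with 0 < |k| < q_{n+l} satisfies |⟨k, ω⟩| ≥ η; (2) there is at most one k ∈ ℤ² with |k| < q_{n+l}/2 and |2ϱ̃ − ⟨k, ω⟩| < η, and at most one k ∈ ℤ² with |k| < q_{n+l}/2 and |2ϱ̃ + ⟨k, ω⟩| < η. -/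
open Filter MeasureTheory Matrix
open scoped Real Topology ENNReal

noncomputable section

namespace Paper

/-- The circle `ℝ/ℤ`. -/
abbrev T1 := AddCircle (1 : ℝ)
/-- The projective line `ℝP¹`, identified with `ℝ/(1/2)ℤ`. -/
abbrev RP1 := AddCircle ((1 : ℝ) / 2)
abbrev M2R := Matrix (Fin 2) (Fin 2) ℝ
abbrev M2C := Matrix (Fin 2) (Fin 2) ℂ

instance : Fact ((0:ℝ) < 1) := ⟨one_pos⟩
instance : Fact ((0:ℝ) < 1 / 2) := ⟨by norm_num⟩

/-- canonical representative of a point of `𝕋` in `[0,1)` -/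
def rep1 (x : T1) : ℝ := (AddCircle.equivIco 1 0 x : ℝ)

/-- canonical representative of a point of `ℝP¹` in `[0,1/2)` -/
def repHalf (φ : RP1) : ℝ := (AddCircle.equivIco (1/2) 0 φ : ℝ)

/-- Euclidean operator norm of a real 2×2 matrix. -/
def opNorm (M : M2R) : ℝ :=
  ‖LinearMap.toContinuousLinearMap (Matrix.toEuclideanLin M)‖

/-- Euclidean operator norm of a complex 2×2 matrix. -/
def opNormC (M : M2C) : ℝ :=
  ‖LinearMap.toContinuousLinearMap (Matrix.toEuclideanLin M)‖

/-- unit vector of angle `2πt` -/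
def dirVec (t : ℝ) : EuclideanSpace ℝ (Fin 2) :=
  (WithLp.equiv 2 (Fin 2 → ℝ)).symm ![Real.cos (2*π*t), Real.sin (2*π*t)]

/-- the class in `ℝP¹ = ℝ/(1/2)ℤ` of the line spanned by a (nonzero) vector `v`:
the angle of `v` divided by `2π`, modulo `1/2`. -/
def lineClass (v : EuclideanSpace ℝ (Fin 2)) : RP1 :=
  ((Complex.arg (v 0 + v 1 * Complex.I) / (2*π) : ℝ) : RP1)

/-- the Möbius (projective) action of a matrix on `ℝP¹`. -/
def projAct (M : M2R) (φ : RP1) : RP1 :=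
  lineClass (Matrix.toEuclideanLin M (dirVec (repHalf φ)))

/-- projective skew product `(x,φ) ↦ (x+a, A(x)·φ)` for `A : 𝕋 → SL(2,ℝ)`. -/
def TprojT (a : T1) (A : T1 → M2R) : T1 × RP1 → T1 × RP1 :=
  fun p => (p.1 + a, projAct (A p.1) p.2)

/-- projective skew product for a map given as a `±`-periodic map on `ℝ`. -/
def TprojR (a : T1) (B : ℝ → M2R) : T1 × RP1 → T1 × RP1 :=
  fun p => (p.1 + a, projAct (B (rep1 p.1)) p.2)

/-- Möbius disjointness for a transformation of `𝕋 × ℝP¹`. -/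
def MobiusDisjoint (T : T1 × RP1 → T1 × RP1) : Prop :=
  ∀ f : T1 × RP1 → ℂ, Continuous f → ∀ p : T1 × RP1,
    Tendsto (fun N : ℕ => (N : ℂ)⁻¹ * ∑ n ∈ Finset.Icc 1 N,
      ((ArithmeticFunction.moebius n : ℤ) : ℂ) * f (T^[n] p)) atTop (𝓝 0)

/-- holomorphic on the horizontal strip of half-width `h`, entrywise -/
def HoloStrip (h : ℝ) (F : ℂ → M2C) : Prop :=
  ∀ i j, DifferentiableOn ℂ (fun z => F z i j) {z : ℂ | |z.im| < h}

/-- 1-periodic -/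
def Per1 (F : ℂ → M2C) : Prop := ∀ z, F (z + 1) = F z

/-- `sup`-bound on the strip, i.e. `‖F‖_h ≤ b`. -/
def StripBound (h : ℝ) (F : ℂ → M2C) (b : ℝ) : Prop :=
  ∀ z : ℂ, |z.im| < h → opNormC (F z) ≤ b

def ExtendsT (F : ℂ → M2C) (A : T1 → M2R) : Prop :=
  ∀ x : ℝ, F (x : ℂ) = (A (x : T1)).map Complex.ofReal

def ExtendsR (F : ℂ → M2C) (B : ℝ → M2R) : Prop :=
  ∀ x : ℝ, F (x : ℂ) = (B x).map Complex.ofReal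

/-- `A : 𝕋 → SL(2,ℝ)` is (real-)analytic: it extends to a bounded holomorphic
1-periodic map on some strip. -/
def TorusAnalytic (A : T1 → M2R) : Prop :=
  ∃ h : ℝ, 0 < h ∧ ∃ F : ℂ → M2C, HoloStrip h F ∧ Per1 F ∧
    (∃ b, StripBound h F b) ∧ ExtendsT F A

def RealAnalyticM (B : ℝ → M2R) : Prop :=
  ∀ (i j : Fin 2) (x : ℝ), AnalyticAt ℝ (fun t => B t i j) x

def PMPeriodic (B : ℝ → M2R) : Prop := ∀ x, B (x + 1) = B x ∨ B (x + 1) = - B x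

def Per1R (B : ℝ → M2R) : Prop := ∀ x, B (x + 1) = B x

def SL2V {X : Type*} (B : X → M2R) : Prop := ∀ x, (B x).det = 1

/-- `(α,A)` is (C^ω-)almost reducible. -/
def AlmostReducible (α : ℝ) (A : T1 → M2R) : Prop :=
  ∀ ε : ℝ, 0 < ε → ∃ (B : ℝ → M2R) (D : M2R), D.det = 1 ∧
    RealAnalyticM B ∧ SL2V B ∧ PMPeriodic B ∧
    ∀ x : ℝ, opNorm ((B (x + α))⁻¹ * A (x : T1) * B x - D) < ε

/-- `(α,A)` is reducible. -/
def Reducible (α : ℝ) (A : T1 → M2R) : Prop :=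
  ∃ (B : ℝ → M2R) (D : M2R), D.det = 1 ∧
    RealAnalyticM B ∧ SL2V B ∧ PMPeriodic B ∧
    ∀ x : ℝ, (B (x + α))⁻¹ * A (x : T1) * B x = D

/-- forward cocycle iterates `A_n(x) = A(x+(n-1)α)⋯A(x)`. -/
def fwdA (α : ℝ) (A : T1 → M2R) : ℕ → T1 → M2R
  | 0, _ => 1
  | n + 1, x => A (x + (((n : ℝ) * α : ℝ) : T1)) * fwdA α A n x

/-- backward cocycle iterates `A_{-n}(x) = A(x-nα)⁻¹⋯A(x-α)⁻¹`. -/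
def bwdA (α : ℝ) (A : T1 → M2R) : ℕ → T1 → M2R
  | 0, _ => 1
  | n + 1, x => (A (x - (((n + 1 : ℕ) * α : ℝ) : T1)))⁻¹ * bwdA α A n x

/-- uniform hyperbolicity of the cocycle `(α, A)`, phrased with continuous
stable/unstable line fields (a continuous invariant splitting of `ℝ²`). -/
def UniformlyHyperbolic (α : ℝ) (A : T1 → M2R) : Prop :=
  ∃ Es Eu : T1 → RP1, Continuous Es ∧ Continuous Eu ∧ (∀ x, Es x ≠ Eu x) ∧
    ∃ C : ℝ, 0 < C ∧ ∃ lam : ℝ, 0 < lam ∧ lam < 1 ∧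
      ∀ (x : T1) (n : ℕ), 1 ≤ n →
        (∀ t : ℝ, ‖Matrix.toEuclideanLin (fwdA α A n x) (t • dirVec (repHalf (Es x)))‖
            ≤ C * lam ^ n * ‖t • dirVec (repHalf (Es x))‖) ∧
        (∀ t : ℝ, ‖Matrix.toEuclideanLin (bwdA α A n x) (t • dirVec (repHalf (Eu x)))‖
            ≤ C * lam ^ n * ‖t • dirVec (repHalf (Eu x))‖)

/-- Gauss-map iterates: `α₀ = {α}`, `α_{n+1} = {α_n⁻¹}`. -/
def gaussIter (α : ℝ) : ℕ → ℝ
  | 0 => Int.fract α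
  | n + 1 => Int.fract (gaussIter α n)⁻¹

/-- continued fraction partial quotients `a_k` (for `k ≥ 1`). -/
def cfa (α : ℝ) (k : ℕ) : ℤ := ⌊(gaussIter α (k - 1))⁻¹⌋

/-- continued fraction denominators `q_k`. -/
def cfq (α : ℝ) : ℕ → ℤ
  | 0 => 1
  | 1 => cfa α 1
  | (k + 2) => cfa α (k + 2) * cfq α (k + 1) + cfq α k

/-- `β(α) = limsup (ln q_{k+1})/q_k`, valued in `[0,∞]`. -/
def betaAlpha (α : ℝ) : ℝ≥0∞ :=
  Filter.atTop.limsup fun k : ℕ => ENNReal.ofReal (Real.log (cfq α (k+1)) / (cfq α k))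

/-- `(q_l, q_n)` is a CD(𝒜,ℬ,𝒞) bridge. -/
def CDBridge (α : ℝ) (a b c : ℝ) (l n : ℕ) : Prop :=
  l ≤ n ∧ (∀ i : ℕ, l ≤ i → i < n → (cfq α (i+1) : ℝ) ≤ (cfq α i : ℝ) ^ a) ∧
    (cfq α l : ℝ) ^ b ≤ (cfq α n : ℝ) ∧ (cfq α n : ℝ) ≤ (cfq α l : ℝ) ^ c

/-- the conclusion of the CD-bridge selection lemma (Lemma 2.2 / AFK) for the
subsequence `Q_k = q_{nk k}`, `Q̄_k = q_{nk k + 1}`. -/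
def CDSelection (α : ℝ) (a : ℝ) (nk : ℕ → ℕ) : Prop :=
  StrictMono nk ∧ nk 0 = 0 ∧
  (∀ k : ℕ, 1 ≤ k → (cfq α (nk k) : ℝ) ≤ (cfq α (nk (k-1) + 1) : ℝ) ^ (a^4)) ∧
  (∀ k : ℕ, 1 ≤ k →
     ((cfq α (nk k) : ℝ) ^ a ≤ (cfq α (nk k + 1) : ℝ)) ∨
     (CDBridge α a a (a^3) (nk (k-1) + 1) (nk k) ∧ CDBridge α a a (a^3) (nk k) (nk (k+1))))

/-- entrywise derivative of a matrix-valued map on `ℝ`. -/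
def matDeriv (B : ℝ → M2R) (x : ℝ) : M2R :=
  Matrix.of fun i j => deriv (fun t => B t i j) x

/-- `‖G‖_{C⁰} ≤ b` (over `ℝ`). -/
def C0R (G : ℝ → M2R) (b : ℝ) : Prop := ∀ x, opNorm (G x) ≤ b

/-- `‖B‖_{C¹} ≤ b` (over `ℝ`). -/
def C1R (B : ℝ → M2R) (b : ℝ) : Prop :=
  ∀ x, opNorm (B x) ≤ b ∧ opNorm (matDeriv B x) ≤ b

def C0T (G : T1 → M2R) (b : ℝ) : Prop := ∀ x, opNorm (G x) ≤ b

/-- `‖G‖_{C⁰}` of a map on `𝕋`. -/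
def normC0T (G : T1 → M2R) : ℝ := ⨆ x : T1, opNorm (G x)

/-- `‖B‖_{C¹}` of a map on `ℝ`. -/
def normC1R (B : ℝ → M2R) : ℝ :=
  max (⨆ x : ℝ, opNorm (B x)) (⨆ x : ℝ, opNorm (matDeriv B x))

/-- the rotation `R_ϱ`. -/
def rotM (ϱ : ℝ) : M2R :=
  !![Real.cos (2*π*ϱ), -Real.sin (2*π*ϱ); Real.sin (2*π*ϱ), Real.cos (2*π*ϱ)]

def rotMC (ϱ : ℝ) : M2C := (rotM ϱ).map Complex.ofReal

/-- the parabolic matrix `[[1,c],[0,1]]`. -/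
def parabM (c : ℝ) : M2R := !![1, c; 0, 1]

/-- the Schrödinger cocycle matrix `S_{v,E}`. -/
def schrodM (v : T1 → ℝ) (E : ℝ) (x : T1) : M2R := !![E - v x, -1; 1, 0]



-- ====== measure complexity ======

/-- Bowen average metric `d̄_n`. -/
def bowen (T : T1 × RP1 → T1 × RP1) (n : ℕ) (x y : T1 × RP1) : ℝ :=
  (n : ℝ)⁻¹ * ∑ i ∈ Finset.range n, dist (T^[i] x) (T^[i] y)

/-- `S_n(d, ρ, ε)`, the measure complexity function. -/
def Scomplexity (T : T1 × RP1 → T1 × RP1) (ρ : Measure (T1 × RP1)) (n : ℕ) (ε : ℝ) : ℕ :=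
  sInf {m : ℕ | ∃ c : Fin m → T1 × RP1,
    ρ (⋃ i, {y | bowen T n (c i) y < ε}) > ENNReal.ofReal (1 - ε)}

-- ====== disk measure and random perturbation ======

/-- normalized Lebesgue measure on the closed unit disk of `ℂ`. -/
def diskMeasure : Measure ℂ :=
  (volume (Metric.closedBall (0:ℂ) 1))⁻¹ • volume.restrict (Metric.closedBall (0:ℂ) 1)

/-- the random perturbation `w_t(x) = Σ_{m≥1} ε(m)·2 Re(t_m e^{2πimx})`. -/
def wPert (ε : ℕ → ℝ) (t : ℕ → ℂ) (x : T1) : ℝ :=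
  ∑' m : ℕ, if m = 0 then 0 else
    ε m * (2 * (t m * Complex.exp (2*π*(m:ℝ)*Complex.I*(rep1 x))).re)

-- ====== Fourier coefficients / dual operator / resonances ======

/-- Fourier coefficients `v̂(l)` of a function on `𝕋`. -/
def vhat (v : T1 → ℝ) (l : ℤ) : ℂ :=
  ∫ x in (0:ℝ)..1, (v (x : T1) : ℂ) * Complex.exp (-2*π*Complex.I*l*x)

/-- the eigenvalue equation `Ĥ_{v,α,θ} u = E u` for the dual operator. -/
def DualEigen (α : ℝ) (v : T1 → ℝ) (θ E : ℝ) (u : ℤ → ℂ) : Prop :=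
  ∀ k : ℤ, (∑' l : ℤ, vhat v l * u (k - l))
      + ((2 * Real.cos (2*π*(θ + (k:ℝ)*α)) : ℝ) : ℂ) * u k = (E : ℂ) * u k

/-- `‖x‖_𝕋 = dist(x, ℤ)`. -/
def distZ (x : ℝ) : ℝ := |x - round x|

/-- `k` is an `ε₀`-resonance of `θ`. -/
def IsResonance (α θ ε₀ : ℝ) (k : ℤ) : Prop :=
  distZ (2*θ - (k:ℝ)*α) ≤ Real.exp (-ε₀ * |(k:ℝ)|) ∧
  ∀ j : ℤ, |j| ≤ |k| → distZ (2*θ - (k:ℝ)*α) ≤ distZ (2*θ - (j:ℝ)*α)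

/-- `k, k'` are consecutive `ε₀`-resonances of `θ` (in the ordering by absolute value). -/
def AdjacentResonances (α θ ε₀ : ℝ) (k k' : ℤ) : Prop :=
  IsResonance α θ ε₀ k ∧ IsResonance α θ ε₀ k' ∧ k ≠ k' ∧ |k| ≤ |k'| ∧
  ∀ k'' : ℤ, IsResonance α θ ε₀ k'' → |k''| ≤ |k| ∨ |k'| ≤ |k''|

/-- the family `{Ĥ_{v,α,θ}}_θ` is almost localized with parameters `C₀, C₁, ε₀, ε₁`. -/
def AlmostLocalized (α : ℝ) (v : T1 → ℝ) (C₀ C₁ ε₀ ε₁ : ℝ) : Prop :=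
  ∀ (θ E : ℝ) (u : ℤ → ℂ), DualEigen α v θ E u → u 0 = 1 →
    (∀ k : ℤ, ‖u k‖ ≤ 1 + |(k:ℝ)|) →
    (∀ nj nj1 : ℤ, AdjacentResonances α θ ε₀ nj nj1 →
      ∀ k : ℤ, C₀ * (1 + |(nj:ℝ)|) ≤ |(k:ℝ)| → |(k:ℝ)| ≤ |(nj1:ℝ)| / C₀ →
        ‖u k‖ ≤ C₁ * Real.exp (-ε₁ * |(k:ℝ)|)) ∧
    (∀ nj : ℤ, IsResonance α θ ε₀ nj →
      (∀ k'' : ℤ, IsResonance α θ ε₀ k'' → |k''| ≤ |nj|) →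
      ∀ k : ℤ, C₀ * (1 + |(nj:ℝ)|) ≤ |(k:ℝ)| →
        ‖u k‖ ≤ C₁ * Real.exp (-ε₁ * |(k:ℝ)|))

/-- the truncation `u^I(x) = Σ_{k ∈ I} û_k e^{2πikx}` with
`I = [-⌊m/2⌋, m - ⌊m/2⌋]`. -/
def uI (u : ℤ → ℂ) (m : ℕ) (z : ℂ) : ℂ :=
  ∑ k ∈ Finset.Icc (-((m:ℤ)/2)) ((m:ℤ) - (m:ℤ)/2),
    u k * Complex.exp (2*π*Complex.I*k*z)

/-- `U^I(x) = (e^{2πiθ} u^I(x), u^I(x-α))ᵀ`. -/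
def UIvec (u : ℤ → ℂ) (θ α : ℝ) (m : ℕ) (z : ℂ) : Fin 2 → ℂ :=
  ![Complex.exp (2*π*Complex.I*θ) * uI u m z, uI u m (z - α)]

/-- the complexified Schrödinger matrix `S_{v,E}` on the strip. -/
def SvECmat (E : ℝ) (vc : ℂ → ℂ) (z : ℂ) : M2C := !![(E:ℂ) - vc z, -1; 1, 0]

/-- `vc` is a holomorphic 1-periodic extension of `v` to the strip of width `h`. -/
def ScalarExt (h : ℝ) (v : T1 → ℝ) (vc : ℂ → ℂ) : Prop :=
  DifferentiableOn ℂ vc {z : ℂ | |z.im| < h} ∧ (∀ z, vc (z+1) = vc z) ∧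
    ∀ x : ℝ, vc (x : ℂ) = ((v (x : T1) : ℝ) : ℂ)

/-- `v : 𝕋 → ℝ` is real-analytic. -/
def ScalarTorusAnalytic (v : T1 → ℝ) : Prop :=
  ∃ h : ℝ, 0 < h ∧ ∃ vc : ℂ → ℂ, ScalarExt h v vc ∧
    ∃ b, ∀ z : ℂ, |z.im| < h → ‖vc z‖ ≤ b

-- ====== two-frequency (continuous time) objects ======

/-- `⟨k, ω⟩ = k₁ + k₂ α` for `ω = (1, α)`. -/
def kip (k : ℤ × ℤ) (α : ℝ) : ℝ := (k.1 : ℝ) + (k.2 : ℝ) * α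

/-- `|k| = |k₁| + |k₂|`. -/
def knorm (k : ℤ × ℤ) : ℝ := ((|k.1| + |k.2| : ℤ) : ℝ)

/-- directional derivative `∂_ω B(θ) = d/dt B(θ + tω)|₀`. -/
def dOm (ω : ℝ × ℝ) (B : ℝ × ℝ → M2R) (θ : ℝ × ℝ) : M2R :=
  Matrix.of fun i j => deriv (fun t : ℝ => B (θ.1 + t * ω.1, θ.2 + t * ω.2) i j) 0

/-- Fourier coefficient `F̂(k)` of a function on `𝕋²`. -/
def fhat2 (F : ℝ × ℝ → M2R) (k : ℤ × ℤ) : M2C :=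
  Matrix.of fun i j => ∫ θ in Set.Icc (0:ℝ) 1 ×ˢ Set.Icc (0:ℝ) 1,
    ((F θ i j : ℝ) : ℂ) * Complex.exp (-2*π*Complex.I*((k.1:ℝ)*θ.1 + (k.2:ℝ)*θ.2))

/-- weighted Fourier norm `|F|_h = Σ_k ‖F̂(k)‖ e^{2π|k|h}`, valued in `[0,∞]`. -/
def wnorm2 (h : ℝ) (F : ℝ × ℝ → M2R) : ℝ≥0∞ :=
  ∑' k : ℤ × ℤ, ENNReal.ofReal (opNormC (fhat2 F k) * Real.exp (2*π*(knorm k)*h))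

def Per2 (F : ℝ × ℝ → M2R) : Prop :=
  ∀ θ : ℝ × ℝ, F (θ.1 + 1, θ.2) = F θ ∧ F (θ.1, θ.2 + 1) = F θ

def PMPer2 (B : ℝ × ℝ → M2R) : Prop :=
  ∀ θ : ℝ × ℝ, (B (θ.1 + 1, θ.2) = B θ ∨ B (θ.1 + 1, θ.2) = -B θ) ∧
    (B (θ.1, θ.2 + 1) = B θ ∨ B (θ.1, θ.2 + 1) = -B θ)

def RealAnalytic2 (B : ℝ × ℝ → M2R) : Prop :=
  ∀ (i j : Fin 2) (θ : ℝ × ℝ), AnalyticAt ℝ (fun t => B t i j) θ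

def Cont2 (F : ℝ × ℝ → M2R) : Prop := ∀ i j, Continuous fun θ => F θ i j

def Strip2 (h : ℝ) : Set (ℂ × ℂ) := {z | |z.1.im| < h ∧ |z.2.im| < h}

def HoloStrip2 (h : ℝ) (F : ℂ × ℂ → M2C) : Prop :=
  ∀ i j, DifferentiableOn ℂ (fun z => F z i j) (Strip2 h)

def Per2C (F : ℂ × ℂ → M2C) : Prop :=
  ∀ z : ℂ × ℂ, F (z.1 + 1, z.2) = F z ∧ F (z.1, z.2 + 1) = F z

def StripBound2 (h : ℝ) (F : ℂ × ℂ → M2C) (b : ℝ) : Prop :=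
  ∀ z ∈ Strip2 h, opNormC (F z) ≤ b

def Extends2 (F : ℂ × ℂ → M2C) (G : ℝ × ℝ → M2R) : Prop :=
  ∀ θ : ℝ × ℝ, F ((θ.1 : ℂ), (θ.2 : ℂ)) = (G θ).map Complex.ofReal

/-- `‖B‖_{C¹} ≤ b` for a map on `ℝ²` (sup of `B` and its partial derivatives). -/
def C1R2 (B : ℝ × ℝ → M2R) (b : ℝ) : Prop :=
  ∀ θ : ℝ × ℝ, opNorm (B θ) ≤ b ∧
    opNorm (Matrix.of fun i j => deriv (fun t => B (θ.1 + t, θ.2) i j) 0) ≤ b ∧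
    opNorm (Matrix.of fun i j => deriv (fun t => B (θ.1, θ.2 + t) i j) 0) ≤ b

/-- `A = 2πϱJ` with `J = [[0,1],[-1,0]]`. -/
def rotGen (ϱ : ℝ) : M2R := !![0, 2*π*ϱ; -(2*π*ϱ), 0]

/-- `[[0,c],[0,0]]`. -/
def parabGen (c : ℝ) : M2R := !![0, c; 0, 0]

def parabGenC (c : ℝ) : M2C := (parabGen c).map Complex.ofReal

/-!
The whole statement rests on the best approximation property of the continued-fraction
denominators: if `0 < |p| < q_m` then `‖pα‖_𝕋 ≥ ‖q_{m-1}α‖_𝕋 ≥ 1/(q_{m-1} + q_m) ≥ 1/(2q_m)`.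
It holds because `(q_{m-1}, p_{m-1})`, `(q_m, p_m)` is a basis of `ℤ²` in which `(p, -r)` has
coordinates of opposite signs, while `q_{m-1}α - p_{m-1}` and `q_mα - p_m` have opposite signs too.
With `m = n + l` it gives `|⟨k, ω⟩| ≥ 1/(2q_{n+l}) ≥ 2η` for `0 < |k| < q_{n+l}`; two distinct
sites `k, k'` with `|k|, |k'| < q_{n+l}/2` that are both `η`-close to `±2ϱ̃` would violate this
bound for `k - k'`.
-/

theorem abs_le_abs_add_of_mul_nonneg {R : Type*} [Ring R] [LinearOrder R] [IsStrictOrderedRing R]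
    {a b : R} (h : 0 ≤ a * b) : |a| ≤ |a + b| := by
  rw [(abs_add_eq_add_abs_iff a b).2 (mul_nonneg_iff.1 h)]
  exact le_add_of_nonneg_right (abs_nonneg b)

section ContinuedFraction

variable {α : ℝ}

theorem gaussIter_irrational (hα : Irrational α) : ∀ k, Irrational (gaussIter α k)
  | 0 => by simpa only [gaussIter, ← Int.self_sub_floor] using hα.sub_intCast ⌊α⌋
  | k + 1 => by
    simpa only [gaussIter, ← Int.self_sub_floor] using
      (gaussIter_irrational hα k).inv.sub_intCast ⌊(gaussIter α k)⁻¹⌋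

theorem gaussIter_nonneg (k : ℕ) : 0 ≤ gaussIter α k := by
  cases k <;> exact Int.fract_nonneg _

theorem gaussIter_lt_one (k : ℕ) : gaussIter α k < 1 := by
  cases k <;> exact Int.fract_lt_one _

theorem gaussIter_pos (hα : Irrational α) (k : ℕ) : 0 < gaussIter α k :=
  (gaussIter_nonneg k).lt_of_ne (gaussIter_irrational hα k).ne_zero.symm

theorem inv_gaussIter (k : ℕ) : (gaussIter α k)⁻¹ = cfa α (k + 1) + gaussIter α (k + 1) :=
  (Int.floor_add_fract _).symm

theorem one_le_cfa (hα : Irrational α) (k : ℕ) : 1 ≤ cfa α (k + 1) :=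
  Int.le_floor.2 <| by
    simpa using one_le_inv₀ (gaussIter_pos hα k) |>.2 (gaussIter_lt_one k).le

theorem one_le_cfq (hα : Irrational α) : ∀ k, 1 ≤ cfq α k
  | 0 => le_rfl
  | 1 => one_le_cfa hα 0
  | k + 2 => by
    have := one_le_cfa hα (k + 1)
    have := one_le_cfq hα k
    have := one_le_cfq hα (k + 1)
    rw [cfq]
    nlinarith

theorem cfq_le_cfq_succ (hα : Irrational α) : ∀ k, cfq α k ≤ cfq α (k + 1)
  | 0 => one_le_cfa hα 0
  | k + 1 => by
    have := one_le_cfa hα (k + 1)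
    have := one_le_cfq hα k
    have := one_le_cfq hα (k + 1)
    rw [cfq]
    nlinarith

variable (α) in
/-- Numerators of the convergents of `Int.fract α` (not of `α`). -/
def cfp : ℕ → ℤ
  | 0 => 0
  | 1 => 1
  | k + 2 => cfa α (k + 2) * cfp (k + 1) + cfp k

theorem cfq_succ_mul_cfp_sub_cfp_succ_mul_cfq :
    ∀ k, cfq α (k + 1) * cfp α k - cfp α (k + 1) * cfq α k = (-1) ^ (k + 1)
  | 0 => by simp [cfq, cfp]
  | k + 1 => by
    rw [cfq, cfp]
    linear_combination -cfq_succ_mul_cfp_sub_cfp_succ_mul_cfq k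

variable (α) in
/-- `gaussProd α k = |q_k {α} - p_k|`, see `cfq_mul_fract_sub_cfp`. -/
def gaussProd (k : ℕ) : ℝ := ∏ i ∈ Finset.range (k + 1), gaussIter α i

theorem gaussProd_pos (hα : Irrational α) (k : ℕ) : 0 < gaussProd α k :=
  Finset.prod_pos fun i _ => gaussIter_pos hα i

theorem gaussProd_succ (k : ℕ) : gaussProd α (k + 1) = gaussProd α k * gaussIter α (k + 1) :=
  Finset.prod_range_succ _ _

theorem gaussProd_succ_le (hα : Irrational α) (k : ℕ) : gaussProd α (k + 1) ≤ gaussProd α k := by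
  rw [gaussProd_succ]
  exact mul_le_of_le_one_right (gaussProd_pos hα k).le (gaussIter_lt_one _).le

theorem gaussProd_zero : gaussProd α 0 = Int.fract α := by
  simp [gaussProd, gaussIter]

theorem gaussProd_one (hα : Irrational α) : gaussProd α 1 = 1 - cfa α 1 * Int.fract α := by
  have hθ : Int.fract α ≠ 0 := (gaussIter_irrational hα 0).ne_zero
  rw [gaussProd_succ, gaussProd_zero, ← sub_eq_of_eq_add' (inv_gaussIter 0)]
  simp only [gaussIter]
  field_simp

theorem gaussProd_add_two (hα : Irrational α) (k : ℕ) :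
    gaussProd α (k + 2) = gaussProd α k - cfa α (k + 2) * gaussProd α (k + 1) := by
  have hg : gaussIter α (k + 1) ≠ 0 := (gaussIter_pos hα (k + 1)).ne'
  rw [gaussProd_succ (k + 1), ← sub_eq_of_eq_add' (inv_gaussIter (k + 1)), gaussProd_succ k]
  field_simp

theorem cfq_mul_fract_sub_cfp (hα : Irrational α) :
    ∀ k, cfq α k * Int.fract α - cfp α k = (-1) ^ k * gaussProd α k
  | 0 => by simp [cfq, cfp, gaussProd_zero]
  | 1 => by simp [cfq, cfp, gaussProd_one hα]
  | k + 2 => by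
    rw [cfq, cfp, gaussProd_add_two hα]
    push_cast
    linear_combination (cfa α (k + 2) : ℝ) * cfq_mul_fract_sub_cfp hα (k + 1) +
      cfq_mul_fract_sub_cfp hα k

theorem cfq_succ_mul_gaussProd_add_cfq_mul_gaussProd_succ (hα : Irrational α) :
    ∀ k, (cfq α (k + 1) : ℝ) * gaussProd α k + cfq α k * gaussProd α (k + 1) = 1
  | 0 => by
    simp only [cfq, gaussProd_one hα, gaussProd_zero]
    push_cast
    ring
  | k + 1 => by
    rw [cfq, gaussProd_add_two hα]
    push_cast
    linear_combination cfq_succ_mul_gaussProd_add_cfq_mul_gaussProd_succ hα k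

theorem one_div_cfq_add_cfq_succ_le_gaussProd (hα : Irrational α) (k : ℕ) :
    1 / ((cfq α k : ℝ) + cfq α (k + 1)) ≤ gaussProd α k := by
  have hq : (1 : ℝ) ≤ cfq α k := by exact_mod_cast one_le_cfq hα k
  have hq' : (1 : ℝ) ≤ cfq α (k + 1) := by exact_mod_cast one_le_cfq hα (k + 1)
  rw [div_le_iff₀ (by linarith)]
  have := cfq_succ_mul_gaussProd_add_cfq_mul_gaussProd_succ hα k
  have := gaussProd_succ_le hα k
  nlinarith

/-- Best approximation property of the denominators `q_m`. -/
theorem gaussProd_le_abs_add_mul_fract (hα : Irrational α) {m : ℕ} {r p : ℤ} (hp : p ≠ 0)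
    (hpm : |p| < cfq α (m + 1)) : gaussProd α m ≤ |r + p * Int.fract α| := by
  -- write `(p, -r) = x • (q_m, p_m) + y • (q_{m+1}, p_{m+1})`, solving by Cramer's rule
  set s : ℤ := (-1) ^ m with hs_def
  have hs : s * s = 1 := by rw [hs_def, ← mul_pow]; norm_num
  have hdet := cfq_succ_mul_cfp_sub_cfp_succ_mul_cfq (α := α) m
  set x : ℤ := s * (p * cfp α (m + 1) + r * cfq α (m + 1))
  set y : ℤ := -s * (r * cfq α m + p * cfp α m)
  have hxp : x * cfq α m + y * cfq α (m + 1) = p := by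
    linear_combination (-s * p) * hdet + p * hs
  have hxr : x * cfp α m + y * cfp α (m + 1) = -r := by
    linear_combination (s * r) * hdet - r * hs
  have hq := one_le_cfq hα m
  have hq' := one_le_cfq hα (m + 1)
  have hy : 0 ≤ x * y → y = 0 := by
    intro hxy
    have hyp : |y| * cfq α (m + 1) ≤ |p| :=
      calc |y| * cfq α (m + 1) = |y * cfq α (m + 1)| := by
            rw [abs_mul y, abs_of_pos (show 0 < cfq α (m + 1) by omega)]
        _ ≤ |y * cfq α (m + 1) + x * cfq α m| := abs_le_abs_add_of_mul_nonneg <| by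
          rw [show y * cfq α (m + 1) * (x * cfq α m) = x * y * (cfq α m * cfq α (m + 1)) by ring]
          exact mul_nonneg hxy (by positivity)
        _ = |p| := by rw [← hxp, add_comm]
    by_contra hy0
    nlinarith [Int.one_le_abs hy0]
  have hx : x ≠ 0 := by
    intro hx0
    rw [hx0, hy (by rw [hx0, zero_mul])] at hxp
    exact hp (by simpa using hxp.symm)
  have hxy : x * y ≤ 0 := by
    by_contra h
    rw [hy (not_le.1 h).le, mul_zero] at h
    exact h le_rfl
  have hsum : (r : ℝ) + p * Int.fract α
      = (-1) ^ m * (x * gaussProd α m + -y * gaussProd α (m + 1)) := by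
    have hxpR : (x : ℝ) * cfq α m + y * cfq α (m + 1) = p := by exact_mod_cast hxp
    have hxrR : (x : ℝ) * cfp α m + y * cfp α (m + 1) = -r := by exact_mod_cast hxr
    linear_combination (x : ℝ) * cfq_mul_fract_sub_cfp hα m +
      (y : ℝ) * cfq_mul_fract_sub_cfp hα (m + 1) - Int.fract α * hxpR + hxrR
  have hP := gaussProd_pos hα m
  have hP' := gaussProd_pos hα (m + 1)
  calc gaussProd α m ≤ |(x : ℝ) * gaussProd α m| := by
        rw [abs_mul, abs_of_pos hP]
        exact le_mul_of_one_le_left hP.le (by exact_mod_cast Int.one_le_abs hx)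
    _ ≤ |x * gaussProd α m + -y * gaussProd α (m + 1)| := abs_le_abs_add_of_mul_nonneg <| by
        have : (x : ℝ) * y ≤ 0 := by exact_mod_cast hxy
        nlinarith [mul_pos hP hP']
    _ = |r + p * Int.fract α| := by rw [hsum, abs_mul, abs_pow, abs_neg, abs_one, one_pow, one_mul]

theorem one_div_two_mul_cfq_le_abs_add_mul (hα : Irrational α) {m : ℕ} {r p : ℤ} (hp : p ≠ 0)
    (hpm : |p| < cfq α m) : 1 / (2 * (cfq α m : ℝ)) ≤ |r + p * α| := by
  obtain _ | m := m
  · exact absurd hpm (not_lt.2 (Int.one_le_abs hp))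
  have hq : (1 : ℝ) ≤ cfq α m := by exact_mod_cast one_le_cfq hα m
  have hle : (cfq α m : ℝ) ≤ cfq α (m + 1) := by exact_mod_cast cfq_le_cfq_succ hα m
  calc 1 / (2 * (cfq α (m + 1) : ℝ)) ≤ 1 / ((cfq α m : ℝ) + cfq α (m + 1)) :=
        one_div_le_one_div_of_le (by linarith) (by linarith)
    _ ≤ gaussProd α m := one_div_cfq_add_cfq_succ_le_gaussProd hα m
    _ ≤ |((r + p * ⌊α⌋ : ℤ) : ℝ) + p * Int.fract α| := gaussProd_le_abs_add_mul_fract hα hp hpm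
    _ = |r + p * α| := by rw [← Int.self_sub_floor]; push_cast; ring_nf

end ContinuedFraction

theorem kip_sub (k k' : ℤ × ℤ) (α : ℝ) : kip (k - k') α = kip k α - kip k' α := by
  simp only [kip, Prod.fst_sub, Prod.snd_sub, Int.cast_sub]
  ring

theorem knorm_sub_le (k k' : ℤ × ℤ) : knorm (k - k') ≤ knorm k + knorm k' := by
  simp only [knorm, Prod.fst_sub, Prod.snd_sub]
  push_cast
  linarith [abs_sub (k.1 : ℝ) k'.1, abs_sub (k.2 : ℝ) k'.2]

theorem one_div_two_mul_cfq_le_abs_kip {α : ℝ} (hα : Irrational α) {m : ℕ} {k : ℤ × ℤ}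
    (hk : k ≠ 0) (hkm : knorm k < cfq α m) : 1 / (2 * (cfq α m : ℝ)) ≤ |kip k α| := by
  obtain ⟨k₁, k₂⟩ := k
  have hq : (1 : ℝ) ≤ cfq α m := by exact_mod_cast one_le_cfq hα m
  rcases eq_or_ne k₂ 0 with rfl | hk₂
  · have hk₁ : k₁ ≠ 0 := by rintro rfl; exact hk rfl
    calc 1 / (2 * (cfq α m : ℝ)) ≤ 1 := by rw [div_le_one (by linarith)]; linarith
      _ ≤ |(k₁ : ℝ)| := by exact_mod_cast Int.one_le_abs hk₁
      _ = |kip (k₁, 0) α| := by simp [kip]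
  · have hkm' : |k₁| + |k₂| < cfq α m := by unfold knorm at hkm; exact_mod_cast hkm
    exact one_div_two_mul_cfq_le_abs_add_mul hα hk₂ (by linarith [abs_nonneg k₁])

theorem eq_of_abs_sub_kip_lt {α : ℝ} (hα : Irrational α) {m : ℕ} {c η : ℝ}
    (hη : η ≤ 1 / (4 * (cfq α m : ℝ))) {k k' : ℤ × ℤ} (hk : knorm k < cfq α m / 2)
    (hk' : knorm k' < cfq α m / 2) (h : |c - kip k α| < η) (h' : |c - kip k' α| < η) :
    k = k' := by
  by_contra hne
  have hq : (1 : ℝ) ≤ cfq α m := by exact_mod_cast one_le_cfq hα m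
  have hlow := one_div_two_mul_cfq_le_abs_kip hα (sub_ne_zero.2 hne)
    ((knorm_sub_le k k').trans_lt (by linarith))
  have hup : |kip (k - k') α| < 2 * η := by
    rw [kip_sub, ← sub_sub_sub_cancel_left _ _ c]
    exact (abs_sub _ _).trans_lt (by linarith)
  have h2η : 2 * η ≤ 1 / (2 * (cfq α m : ℝ)) := by
    rw [show 1 / (2 * (cfq α m : ℝ)) = 2 * (1 / (4 * cfq α m)) by field_simp; ring]
    linarith
  linarith

theorem resonant_sites_structure_general
    (α : ℝ) (hα : Irrational α) (a : ℝ) (ϱt η : ℝ) (n l : ℕ)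
    (hη : η ≤ 1 / (4 * (cfq α n : ℝ) ^ (a^4)))
    (hql : (cfq α (n + l) : ℝ) ≤ (cfq α n : ℝ) ^ (a^4)) :
    (∀ k : ℤ × ℤ, 0 < |k.1| + |k.2| → knorm k < (cfq α (n+l) : ℝ) →
      η ≤ |kip k α|) ∧
    (∀ k k' : ℤ × ℤ, knorm k < (cfq α (n+l) : ℝ)/2 → knorm k' < (cfq α (n+l) : ℝ)/2 →
      |2*ϱt - kip k α| < η → |2*ϱt - kip k' α| < η → k = k') ∧
    (∀ k k' : ℤ × ℤ, knorm k < (cfq α (n+l) : ℝ)/2 → knorm k' < (cfq α (n+l) : ℝ)/2 →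
      |2*ϱt + kip k α| < η → |2*ϱt + kip k' α| < η → k = k') := by
  have hq : (1 : ℝ) ≤ cfq α (n + l) := by exact_mod_cast one_le_cfq hα (n + l)
  have hηq : η ≤ 1 / (4 * (cfq α (n + l) : ℝ)) :=
    hη.trans (one_div_le_one_div_of_le (by linarith) (by linarith))
  refine ⟨fun k hk hkm => ?_, fun k k' => eq_of_abs_sub_kip_lt hα hηq,
    fun k k' hk hk' h h' => ?_⟩
  · calc η ≤ 1 / (4 * (cfq α (n + l) : ℝ)) := hηq
      _ ≤ 1 / (2 * (cfq α (n + l) : ℝ)) := one_div_le_one_div_of_le (by linarith) (by linarith)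
      _ ≤ |kip k α| := one_div_two_mul_cfq_le_abs_kip hα (by rintro rfl; simp at hk) hkm
  · have hneg (k : ℤ × ℤ) : |2 * ϱt + kip k α| = |-(2 * ϱt) - kip k α| := by
      rw [← abs_neg]; ring_nf
    rw [hneg] at h h'
    exact eq_of_abs_sub_kip_lt hα hηq hk hk' h h'

/-- Structure of the sets `Λ₁ᶜ`, `Λ₂ⱼᶜ` of resonant
frequencies: if `0 < η ≤ 1/(4 q_n^{𝒜⁴})` and `q_{n+l} ≤ q_n^{𝒜⁴}` then every
`0 < |k| < q_{n+l}` satisfies `|⟨k,ω⟩| ≥ η`, and for each sign there is at most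
one `k` with `|k| < q_{n+l}/2` and `|2ϱ̃ ∓ ⟨k,ω⟩| < η`. -/
theorem resonant_sites_structure
    (α : ℝ) (hα : Irrational α) (a : ℝ) (ha : 0 < a) (ϱt η : ℝ) (n l : ℕ)
    (hη0 : 0 < η) (hη : η ≤ 1 / (4 * (cfq α n : ℝ) ^ (a^4)))
    (hql : (cfq α (n + l) : ℝ) ≤ (cfq α n : ℝ) ^ (a^4)) :
    (∀ k : ℤ × ℤ, 0 < |k.1| + |k.2| → knorm k < (cfq α (n+l) : ℝ) →
      η ≤ |kip k α|) ∧
    (∀ k k' : ℤ × ℤ, knorm k < (cfq α (n+l) : ℝ)/2 → knorm k' < (cfq α (n+l) : ℝ)/2 →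
      |2*ϱt - kip k α| < η → |2*ϱt - kip k' α| < η → k = k') ∧
    (∀ k k' : ℤ × ℤ, knorm k < (cfq α (n+l) : ℝ)/2 → knorm k' < (cfq α (n+l) : ℝ)/2 →
      |2*ϱt + kip k α| < η → |2*ϱt + kip k' α| < η → k = k') :=
  resonant_sites_structure_general α hα a ϱt η n l hη hql

end Paper

end
end

section
/- There is an absolute constant C* ≥ 1 such that the following holds. Let α ∈ ℝ be irrational, let A ∈ SL(2,ℝ) be either the rotation R_ϱ for some ϱ ∈ ℝ or the parabolic matrix [[1, c*],[0, 1]] with |c*| ≤ 1, and let F : 𝕋 → M₂(ℝ) be continuous with I + F(θ) ∈ SL(2,ℝ) for all θ; set Ã(θ) = A(I + F(θ)). Then for every integer m with 0 ≤ m and 64 m³ ‖F‖_{C⁰} ≤ 1, and for every (θ, φ) ∈ 𝕋 × ℝP¹: d(T_{(α,A)}^m(θ, φ), T_{(α,Ã)}^m(θ, φ)) ≤ 16 C* m³ ‖A^m‖⁴ ‖F‖_{C⁰}. -/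
open Filter MeasureTheory Matrix
open scoped Real Topology ENNReal

noncomputable section

namespace Paper

/-!
After `m` steps the perturbed fibre map is the product `G (m-1) ⋯ G 0` with
`G j = A (1 + F (θ + j α))`; replace the factors of `A ^ m` by the `G j` one at a time.
Lines at distance `d` in `ℝP¹` spanned by `v` and `w` satisfy `sin (2π d) ‖v‖ ‖w‖ = |v × w|`,
and `SL(2,ℝ)` preserves `×`. Hence `M ∈ SL(2,ℝ)` is `(π/2) ‖M‖²`-Lipschitz on `ℝP¹` and
`d(M·φ, N·φ) ≤ ‖N‖ ‖N - M‖ / 4`, so each exchange costs at most `(π/2) a⁵ ‖F‖` with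
`a = max_{k ≤ m} ‖A ^ k‖`, as long as Duhamel's formula keeps the partial products below `2 a`.
For a rotation `a = 1`; for `[[1,c],[0,1]]` with `|c| ≤ 1`, `a = 1 + m |c|` is at most both
`2 m` and `2 ‖A ^ m‖`.
-/
-- With this instance `‖M‖` is definitionally `opNorm M`.
open scoped Matrix.Norms.L2Operator
open Real

local notation "ℝ²" => EuclideanSpace ℝ (Fin 2)

section PlaneGeometry

theorem norm_toEuclideanLin_le (M : M2R) (v : ℝ²) : ‖toEuclideanLin M v‖ ≤ ‖M‖ * ‖v‖ :=
  (toEuclideanCLM (𝕜 := ℝ) M).le_opNorm v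

theorem toEuclideanLin_apply_fin_two (M : M2R) (v : ℝ²) (i : Fin 2) :
    toEuclideanLin M v i = M i 0 * v 0 + M i 1 * v 1 := by
  simp only [Matrix.toLpLin_apply, PiLp.toLp_apply, Matrix.mulVec, dotProduct, Fin.sum_univ_two]

theorem toEuclideanLin_mul_apply (M N : M2R) (v : ℝ²) :
    toEuclideanLin (M * N) v = toEuclideanLin M (toEuclideanLin N v) := by
  simp [Matrix.toLpLin_apply]

theorem norm_sq_fin_two (v : ℝ²) : ‖v‖ ^ 2 = v 0 ^ 2 + v 1 ^ 2 := by
  simp [EuclideanSpace.real_norm_sq_eq, Fin.sum_univ_two]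

theorem abs_apply_le_norm (M : M2R) (i j : Fin 2) : |M i j| ≤ ‖M‖ := by
  have h := norm_toEuclideanLin_le M (EuclideanSpace.single j 1)
  rw [PiLp.norm_single, norm_one, mul_one] at h
  refine le_trans (le_of_eq ?_) ((PiLp.norm_apply_le _ i).trans h)
  simp [Matrix.toLpLin_apply, Matrix.mulVec_single]

def cross (v w : ℝ²) : ℝ := v 0 * w 1 - v 1 * w 0

theorem abs_cross_le (v w : ℝ²) : |cross v w| ≤ ‖v‖ * ‖w‖ := by
  apply abs_le_of_sq_le_sq _ (by positivity)
  rw [mul_pow, norm_sq_fin_two, norm_sq_fin_two, cross]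
  nlinarith [sq_nonneg (v 0 * w 0 + v 1 * w 1)]

theorem cross_toEuclideanLin (M : M2R) (v w : ℝ²) :
    cross (toEuclideanLin M v) (toEuclideanLin M w) = M.det * cross v w := by
  simp only [cross, toEuclideanLin_apply_fin_two, Matrix.det_fin_two]
  ring

theorem cross_add_right_self (v w : ℝ²) : cross v (v + w) = cross v w := by
  simp only [cross, PiLp.add_apply]
  ring

def perp (v : ℝ²) : ℝ² := !₂[-v 1, v 0]

theorem norm_perp (v : ℝ²) : ‖perp v‖ = ‖v‖ := by
  rw [← sq_eq_sq₀ (norm_nonneg _) (norm_nonneg _), norm_sq_fin_two, norm_sq_fin_two]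
  simp [perp]
  ring

theorem cross_perp (v : ℝ²) : cross v (perp v) = ‖v‖ ^ 2 := by
  rw [norm_sq_fin_two]
  simp [cross, perp]
  ring

theorem toEuclideanLin_ne_zero {M : M2R} (hM : M.det ≠ 0) {v : ℝ²} (hv : v ≠ 0) :
    toEuclideanLin M v ≠ 0 := by
  intro h
  have := cross_toEuclideanLin M v (perp v)
  rw [h, cross_perp] at this
  simp [cross, hM, hv] at this

theorem norm_le_norm_mul_norm_toEuclideanLin {M : M2R} (hM : M.det = 1) (v : ℝ²) :
    ‖v‖ ≤ ‖M‖ * ‖toEuclideanLin M v‖ := by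
  have key : ‖v‖ * ‖v‖ ≤ ‖M‖ * ‖toEuclideanLin M v‖ * ‖v‖ :=
    calc ‖v‖ * ‖v‖ = |cross (toEuclideanLin M v) (toEuclideanLin M (perp v))| := by
          rw [cross_toEuclideanLin, hM, one_mul, cross_perp, abs_of_nonneg (by positivity), sq]
      _ ≤ ‖toEuclideanLin M v‖ * (‖M‖ * ‖perp v‖) :=
          (abs_cross_le _ _).trans (by gcongr; exact norm_toEuclideanLin_le M _)
      _ = ‖M‖ * ‖toEuclideanLin M v‖ * ‖v‖ := by rw [norm_perp]; ring
  rcases (norm_nonneg v).eq_or_lt with h0 | hpos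
  · rw [← h0]; positivity
  · exact le_of_mul_le_mul_right key hpos

theorem one_le_norm_of_det_eq_one {M : M2R} (hM : M.det = 1) : 1 ≤ ‖M‖ := by
  set e : ℝ² := EuclideanSpace.single 0 1
  have he : ‖e‖ = 1 := by simp [e]
  have h := (norm_le_norm_mul_norm_toEuclideanLin hM e).trans
    (mul_le_mul_of_nonneg_left (norm_toEuclideanLin_le M e) (norm_nonneg M))
  rw [he, mul_one] at h
  nlinarith [norm_nonneg M]

end PlaneGeometry

section ProjectiveLine

open Complex (orthonormalBasisOneI)

theorem dist_le_quarter (φ ψ : RP1) : dist φ ψ ≤ 1 / 4 := by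
  rw [dist_eq_norm]
  convert AddCircle.norm_le_half_period (1 / 2 : ℝ) (x := φ - ψ) (by norm_num) using 1
  norm_num

theorem sin_two_pi_dist_coe (s t : ℝ) :
    sin (2 * π * dist (s : RP1) (t : RP1)) = |sin (2 * π * (s - t))| := by
  have hquarter := dist_le_quarter s t
  set k := round ((1 / 2 : ℝ)⁻¹ * (s - t))
  rw [dist_eq_norm, ← AddCircle.coe_sub, AddCircle.norm_eq] at hquarter ⊢
  rw [← abs_of_pos two_pi_pos, ← abs_mul, ← abs_sin_eq_sin_abs_of_abs_le_pi, abs_of_pos two_pi_pos]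
  · rw [show 2 * π * (s - t - k * (1 / 2)) = 2 * π * (s - t) - k * π by ring,
      sin_sub_int_mul_pi, abs_mul, abs_neg_one_zpow, one_mul]
  · rw [abs_mul, abs_of_pos two_pi_pos]
    nlinarith [pi_pos]

theorem lineClass_eq_arg (v : ℝ²) :
    lineClass v = ((Complex.arg (orthonormalBasisOneI.repr.symm v) / (2 * π) : ℝ) : RP1) := rfl

theorem sin_two_pi_dist_lineClass {v w : ℝ²} (hv : v ≠ 0) (hw : w ≠ 0) :
    sin (2 * π * dist (lineClass v) (lineClass w)) * (‖v‖ * ‖w‖) = |cross v w| := by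
  set z := orthonormalBasisOneI.repr.symm v
  set z' := orthonormalBasisOneI.repr.symm w
  have hz : z ≠ 0 := (map_ne_zero_iff _ (LinearIsometryEquiv.injective _)).mpr hv
  have hz' : z' ≠ 0 := (map_ne_zero_iff _ (LinearIsometryEquiv.injective _)).mpr hw
  have hnz : ‖z‖ = ‖v‖ := LinearIsometryEquiv.norm_map _ v
  have hnz' : ‖z'‖ = ‖w‖ := LinearIsometryEquiv.norm_map _ w
  rw [lineClass_eq_arg, lineClass_eq_arg, sin_two_pi_dist_coe,
    show 2 * π * (z.arg / (2 * π) - z'.arg / (2 * π)) = z.arg - z'.arg by field_simp,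
    sin_sub, Complex.sin_arg, Complex.sin_arg, Complex.cos_arg hz, Complex.cos_arg hz', hnz, hnz',
    ← abs_of_pos (by positivity : 0 < ‖v‖ * ‖w‖), ← abs_mul, ← abs_neg (cross v w)]
  congr 1
  simp [z, z', cross]
  field_simp

theorem dist_lineClass_mul_le {v w : ℝ²} (hv : v ≠ 0) (hw : w ≠ 0) :
    dist (lineClass v) (lineClass w) * (4 * (‖v‖ * ‖w‖)) ≤ |cross v w| := by
  have hd := dist_le_quarter (lineClass v) (lineClass w)
  have hsin := mul_le_sin (x := 2 * π * dist (lineClass v) (lineClass w))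
    (by positivity) (by nlinarith [pi_pos])
  rw [← sin_two_pi_dist_lineClass hv hw]
  have h4 : 2 / π * (2 * π * dist (lineClass v) (lineClass w))
      = 4 * dist (lineClass v) (lineClass w) := by field_simp; ring
  calc dist (lineClass v) (lineClass w) * (4 * (‖v‖ * ‖w‖))
      = 2 / π * (2 * π * dist (lineClass v) (lineClass w)) * (‖v‖ * ‖w‖) := by rw [h4]; ring
    _ ≤ _ := by gcongr

theorem abs_cross_le_dist_lineClass {v w : ℝ²} (hv : v ≠ 0) (hw : w ≠ 0) :
    |cross v w| ≤ 2 * π * dist (lineClass v) (lineClass w) * (‖v‖ * ‖w‖) := by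
  rw [← sin_two_pi_dist_lineClass hv hw]
  gcongr
  exact sin_le (by positivity)

theorem lineClass_eq_iff_cross_eq_zero {v w : ℝ²} (hv : v ≠ 0) (hw : w ≠ 0) :
    lineClass v = lineClass w ↔ cross v w = 0 := by
  constructor
  · intro h
    simpa [h] using abs_cross_le_dist_lineClass hv hw
  · intro h
    have := dist_lineClass_mul_le hv hw
    rw [h, abs_zero] at this
    have hpos : 0 < 4 * (‖v‖ * ‖w‖) := by positivity
    exact dist_le_zero.mp (nonpos_of_mul_nonpos_left this hpos)

theorem lineClass_toEuclideanLin_congr {M : M2R} (hM : M.det ≠ 0) {v w : ℝ²} (hv : v ≠ 0)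
    (hw : w ≠ 0) (h : lineClass v = lineClass w) :
    lineClass (toEuclideanLin M v) = lineClass (toEuclideanLin M w) := by
  rw [lineClass_eq_iff_cross_eq_zero (toEuclideanLin_ne_zero hM hv) (toEuclideanLin_ne_zero hM hw),
    cross_toEuclideanLin, (lineClass_eq_iff_cross_eq_zero hv hw).mp h, mul_zero]

theorem norm_dirVec (t : ℝ) : ‖dirVec t‖ = 1 := by
  rw [← sq_eq_sq₀ (norm_nonneg _) zero_le_one, norm_sq_fin_two]
  simp [dirVec]

theorem dirVec_ne_zero (t : ℝ) : dirVec t ≠ 0 :=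
  norm_ne_zero_iff.mp (by simp [norm_dirVec])

theorem lineClass_dirVec (t : ℝ) : lineClass (dirVec t) = (t : RP1) := by
  have harg : Complex.arg (Complex.cos ↑(2 * π * t) + Complex.sin ↑(2 * π * t) * Complex.I)
      = 2 * π * t + 2 * π * ⌊(π - 2 * π * t) / (2 * π)⌋ := by
    linarith [Complex.arg_cos_add_sin_mul_I_sub (2 * π * t)]
  have hz : orthonormalBasisOneI.repr.symm (dirVec t)
      = Complex.cos ↑(2 * π * t) + Complex.sin ↑(2 * π * t) * Complex.I := by
    simp [dirVec, Complex.ofReal_cos, Complex.ofReal_sin]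
  rw [lineClass_eq_arg, hz, harg, QuotientAddGroup.eq_iff_sub_mem, AddSubgroup.mem_zmultiples_iff]
  refine ⟨2 * ⌊(π - 2 * π * t) / (2 * π)⌋, ?_⟩
  field_simp
  ring

theorem lineClass_dirVec_repHalf (φ : RP1) : lineClass (dirVec (repHalf φ)) = φ := by
  rw [lineClass_dirVec]
  exact (AddCircle.equivIco (1 / 2) 0).symm_apply_apply φ

end ProjectiveLine

section ProjectiveAction

theorem projAct_one (φ : RP1) : projAct 1 φ = φ := by
  simp [projAct, lineClass_dirVec_repHalf]

theorem projAct_mul {M N : M2R} (hM : M.det ≠ 0) (hN : N.det ≠ 0) (φ : RP1) :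
    projAct (M * N) φ = projAct M (projAct N φ) := by
  have hNv := toEuclideanLin_ne_zero hN (dirVec_ne_zero (repHalf φ))
  rw [projAct, toEuclideanLin_mul_apply, projAct, projAct]
  exact lineClass_toEuclideanLin_congr hM hNv (dirVec_ne_zero _)
    (lineClass_dirVec_repHalf _).symm

theorem dist_projAct_le {M : M2R} (hM : M.det = 1) (φ ψ : RP1) :
    dist (projAct M φ) (projAct M ψ) ≤ π / 2 * ‖M‖ ^ 2 * dist φ ψ := by
  set v := dirVec (repHalf φ)
  set w := dirVec (repHalf ψ)
  have hM0 : M.det ≠ 0 := by simp [hM]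
  have hv : v ≠ 0 := dirVec_ne_zero _
  have hw : w ≠ 0 := dirVec_ne_zero _
  have hMv := toEuclideanLin_ne_zero hM0 hv
  have hMw := toEuclideanLin_ne_zero hM0 hw
  have hcross : |cross v w| ≤ 2 * π * dist φ ψ := by
    simpa [v, w, norm_dirVec, lineClass_dirVec_repHalf] using abs_cross_le_dist_lineClass hv hw
  have hlower : dist (projAct M φ) (projAct M ψ)
      * (4 * (‖toEuclideanLin M v‖ * ‖toEuclideanLin M w‖)) ≤ 2 * π * dist φ ψ := by
    refine (dist_lineClass_mul_le hMv hMw).trans ?_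
    rwa [cross_toEuclideanLin, hM, one_mul]
  have h1v := norm_le_norm_mul_norm_toEuclideanLin hM v
  have h1w := norm_le_norm_mul_norm_toEuclideanLin hM w
  rw [norm_dirVec] at h1v h1w
  have hprod : 1 ≤ ‖M‖ ^ 2 * (‖toEuclideanLin M v‖ * ‖toEuclideanLin M w‖) := by
    nlinarith
  calc dist (projAct M φ) (projAct M ψ)
      ≤ dist (projAct M φ) (projAct M ψ)
        * (‖M‖ ^ 2 * (‖toEuclideanLin M v‖ * ‖toEuclideanLin M w‖)) :=
        le_mul_of_one_le_right dist_nonneg hprod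
    _ = ‖M‖ ^ 2 / 4 * (dist (projAct M φ) (projAct M ψ)
        * (4 * (‖toEuclideanLin M v‖ * ‖toEuclideanLin M w‖))) := by ring
    _ ≤ ‖M‖ ^ 2 / 4 * (2 * π * dist φ ψ) := by gcongr
    _ = π / 2 * ‖M‖ ^ 2 * dist φ ψ := by ring

theorem dist_projAct_projAct_le {M N : M2R} (hM : M.det ≠ 0) (hN : N.det = 1) (φ : RP1) :
    dist (projAct M φ) (projAct N φ) ≤ ‖N‖ * ‖N - M‖ / 4 := by
  set v := dirVec (repHalf φ)
  have hv : v ≠ 0 := dirVec_ne_zero _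
  have hMv := toEuclideanLin_ne_zero hM hv
  have hNv := toEuclideanLin_ne_zero (M := N) (by simp [hN]) hv
  have hcross : |cross (toEuclideanLin M v) (toEuclideanLin N v)|
      ≤ ‖toEuclideanLin M v‖ * ‖N - M‖ := by
    rw [show toEuclideanLin N v = toEuclideanLin M v + toEuclideanLin (N - M) v by
      simp, cross_add_right_self]
    refine (abs_cross_le _ _).trans ?_
    simpa [v, norm_dirVec] using
      mul_le_mul_of_nonneg_left (norm_toEuclideanLin_le (N - M) v) (norm_nonneg _)
  have hlower : ‖toEuclideanLin M v‖ * (dist (projAct M φ) (projAct N φ)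
      * (4 * ‖toEuclideanLin N v‖)) ≤ ‖toEuclideanLin M v‖ * ‖N - M‖ := by
    refine le_trans (le_of_eq ?_) ((dist_lineClass_mul_le hMv hNv).trans hcross)
    simp only [projAct, v]
    ring
  replace hlower := le_of_mul_le_mul_left hlower (norm_pos_iff.mpr hMv)
  have h1 := norm_le_norm_mul_norm_toEuclideanLin hN v
  rw [norm_dirVec] at h1
  calc dist (projAct M φ) (projAct N φ)
      ≤ dist (projAct M φ) (projAct N φ) * (‖N‖ * ‖toEuclideanLin N v‖) :=
        le_mul_of_one_le_right dist_nonneg h1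
    _ = ‖N‖ * (dist (projAct M φ) (projAct N φ) * (4 * ‖toEuclideanLin N v‖)) / 4 := by ring
    _ ≤ ‖N‖ * ‖N - M‖ / 4 := by gcongr

theorem dist_projAct_mul_mul_le {B M N : M2R} (hB : B.det = 1) (hM : M.det ≠ 0) (hN : N.det = 1)
    (φ : RP1) :
    dist (projAct (B * M) φ) (projAct (B * N) φ) ≤ π / 2 * ‖B‖ ^ 2 * (‖N‖ * ‖N - M‖ / 4) := by
  have hB0 : B.det ≠ 0 := by simp [hB]
  rw [projAct_mul hB0 hM, projAct_mul hB0 (by simp [hN])]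
  exact (dist_projAct_le hB _ _).trans (by gcongr; exact dist_projAct_projAct_le hM hN φ)

end ProjectiveAction

section OrderedProduct

variable {R : Type*}

def orderedProd [Monoid R] (G : ℕ → R) : ℕ → R
  | 0 => 1
  | j + 1 => G j * orderedProd G j

theorem orderedProd_const [Monoid R] (A : R) (j : ℕ) : orderedProd (fun _ => A) j = A ^ j := by
  induction j with
  | zero => simp [orderedProd]
  | succ j ih => rw [orderedProd, ih, pow_succ']

theorem det_orderedProd {n K : Type*} [Fintype n] [DecidableEq n] [CommRing K]
    (G : ℕ → Matrix n n K) (j : ℕ) :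
    (orderedProd G j).det = ∏ i ∈ Finset.range j, (G i).det := by
  induction j with
  | zero => simp [orderedProd]
  | succ j ih => rw [orderedProd, det_mul, ih, Finset.prod_range_succ, mul_comm]

theorem orderedProd_eq_pow_add_sum [Ring R] (A : R) (G : ℕ → R) (j : ℕ) :
    orderedProd G j
      = A ^ j + ∑ i ∈ Finset.range j, A ^ (j - 1 - i) * ((G i - A) * orderedProd G i) := by
  induction j with
  | zero => simp [orderedProd]
  | succ j ih =>
    have hshift : ∀ i ∈ Finset.range j, A * (A ^ (j - 1 - i) * ((G i - A) * orderedProd G i))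
        = A ^ (j - i) * ((G i - A) * orderedProd G i) := by
      intro i hi
      rw [show j - i = j - 1 - i + 1 by have := Finset.mem_range.mp hi; omega, pow_succ',
        mul_assoc]
    calc orderedProd G (j + 1) = A * orderedProd G j + (G j - A) * orderedProd G j := by
          rw [orderedProd]; noncomm_ring
      _ = A * (A ^ j + ∑ i ∈ Finset.range j, A ^ (j - 1 - i) * ((G i - A) * orderedProd G i))
          + (G j - A) * orderedProd G j := by rw [← ih]
      _ = _ := by
          rw [mul_add, Finset.mul_sum, Finset.sum_congr rfl hshift, Finset.sum_range_succ,
            Nat.add_sub_cancel, Nat.sub_self, pow_zero, one_mul, ← pow_succ']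
          abel

theorem norm_orderedProd_le [NormedRing R] {A : R} {G : ℕ → R} {m : ℕ} {a ε : ℝ}
    (hA : ∀ k ≤ m, ‖A ^ k‖ ≤ a) (hG : ∀ i, ‖G i - A‖ ≤ ε) (hsmall : 2 * a * ε * m ≤ 1) :
    ∀ j ≤ m, ‖orderedProd G j‖ ≤ 2 * a := by
  intro j
  induction j using Nat.strong_induction_on with
  | _ j ih =>
    intro hjm
    have ha : 0 ≤ a := (norm_nonneg _).trans (hA 0 (Nat.zero_le m))
    have hε : 0 ≤ ε := (norm_nonneg _).trans (hG 0)
    have hterm : ∀ i ∈ Finset.range j,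
        ‖A ^ (j - 1 - i) * ((G i - A) * orderedProd G i)‖ ≤ a * (ε * (2 * a)) := by
      intro i hi
      have hij := Finset.mem_range.mp hi
      refine (norm_mul_le _ _).trans (mul_le_mul (hA _ (by omega)) ?_ (norm_nonneg _) ha)
      exact (norm_mul_le _ _).trans (mul_le_mul (hG i) (ih i hij (by omega)) (norm_nonneg _) hε)
    have hsum : ‖∑ i ∈ Finset.range j, A ^ (j - 1 - i) * ((G i - A) * orderedProd G i)‖ ≤ a :=
      calc _ ≤ ∑ i ∈ Finset.range j, a * (ε * (2 * a)) :=
            (norm_sum_le _ _).trans (Finset.sum_le_sum hterm)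
        _ = (2 * a * ε * j) * a := by simp; ring
        _ ≤ 1 * a := by gcongr; exact le_trans (by gcongr) hsmall
        _ = a := one_mul a
    calc ‖orderedProd G j‖ ≤ a + a := by
          rw [orderedProd_eq_pow_add_sum A]
          exact (norm_add_le _ _).trans (add_le_add (hA j hjm) hsum)
      _ = 2 * a := by ring

end OrderedProduct

section SkewProduct

theorem TprojT_iterate_fst (a : T1) (B : T1 → M2R) (p : T1 × RP1) (k : ℕ) :
    ((TprojT a B)^[k] p).1 = p.1 + k • a := by
  induction k with
  | zero => simp
  | succ k ih => rw [Function.iterate_succ_apply', TprojT, ih, succ_nsmul, add_assoc]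

theorem TprojT_iterate_snd (a : T1) {B : T1 → M2R} (hB : ∀ θ, (B θ).det ≠ 0)
    (p : T1 × RP1) (k : ℕ) :
    ((TprojT a B)^[k] p).2 = projAct (orderedProd (fun j => B (p.1 + j • a)) k) p.2 := by
  induction k with
  | zero => simp [orderedProd, projAct_one]
  | succ k ih =>
    have hdet : (orderedProd (fun j => B (p.1 + j • a)) k).det ≠ 0 := by
      rw [det_orderedProd]
      exact Finset.prod_ne_zero_iff.mpr fun i _ => hB _
    rw [Function.iterate_succ_apply', TprojT, TprojT_iterate_fst, ih, orderedProd,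
      projAct_mul (hB _) hdet]

end SkewProduct

theorem dist_projAct_pow_orderedProd_le {A : M2R} (hA : A.det = 1) {G : ℕ → M2R}
    (hG : ∀ j, (G j).det = 1) {m : ℕ} {a ε : ℝ} (hAa : ∀ k ≤ m, ‖A ^ k‖ ≤ a)
    (hGA : ∀ j, ‖G j - A‖ ≤ ε) (hsmall : 2 * a * ε * m ≤ 1) (φ : RP1) :
    dist (projAct (A ^ m) φ) (projAct (orderedProd G m) φ) ≤ m * (π / 2 * a ^ 4 * ε) := by
  have hdetP : ∀ j, (orderedProd G j).det = 1 := fun j => by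
    rw [det_orderedProd]; exact Finset.prod_eq_one fun i _ => hG i
  have hP := norm_orderedProd_le hAa hGA hsmall
  have hε : 0 ≤ ε := (norm_nonneg _).trans (hGA 0)
  -- in `x j` the `j` factors of `A ^ m` applied first are replaced by `G 0, …, G (j-1)`
  set x : ℕ → RP1 := fun j => projAct (A ^ (m - j) * orderedProd G j) φ
  have hstep : ∀ j < m, dist (x j) (x (j + 1)) ≤ π / 2 * a ^ 4 * ε := by
    intro j hj
    have hxj : x j = projAct (A ^ (m - 1 - j) * (A * orderedProd G j)) φ := by
      simp only [x, ← mul_assoc, ← pow_succ]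
      congr 3; omega
    have hxj1 : x (j + 1) = projAct (A ^ (m - 1 - j) * (G j * orderedProd G j)) φ := by
      simp only [x, orderedProd]
      congr 3; omega
    rw [hxj, hxj1]
    refine (dist_projAct_mul_mul_le (by rw [det_pow, hA, one_pow])
      (by simp [hA, hdetP]) (by rw [det_mul, hG, hdetP, one_mul]) φ).trans ?_
    have h1 : ‖A ^ (m - 1 - j)‖ ≤ a := hAa _ (by omega)
    have h2 : ‖G j * orderedProd G j‖ ≤ 2 * a := hP (j + 1) hj
    have h3 : ‖(G j - A) * orderedProd G j‖ ≤ ε * (2 * a) :=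
      (norm_mul_le _ _).trans (mul_le_mul (hGA j) (hP j hj.le) (norm_nonneg _) hε)
    have ha : 0 ≤ 2 * a := (norm_nonneg _).trans h2
    rw [← sub_mul]
    calc _ ≤ π / 2 * a ^ 2 * ((2 * a) * (ε * (2 * a)) / 4) := by gcongr
      _ = π / 2 * a ^ 4 * ε := by ring
  have hx0 : x 0 = projAct (A ^ m) φ := by simp [x, orderedProd]
  have hxm : x m = projAct (orderedProd G m) φ := by simp [x]
  rw [← hx0, ← hxm]
  calc dist (x 0) (x m) ≤ ∑ j ∈ Finset.range m, dist (x j) (x (j + 1)) :=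
        dist_le_range_sum_dist x m
    _ ≤ ∑ _j ∈ Finset.range m, π / 2 * a ^ 4 * ε :=
        Finset.sum_le_sum fun j hj => hstep j (Finset.mem_range.mp hj)
    _ = m * (π / 2 * a ^ 4 * ε) := by simp

theorem dist_TprojT_iterate_le {A : M2R} (hA : A.det = 1) {F : T1 → M2R}
    (hF : ∀ θ, (1 + F θ).det = 1) {m : ℕ} {a f : ℝ} (hAa : ∀ k ≤ m, ‖A ^ k‖ ≤ a)
    (hFf : ∀ θ, ‖F θ‖ ≤ f) (hsmall : 2 * a ^ 2 * f * m ≤ 1) (α : T1) (p : T1 × RP1) :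
    dist ((TprojT α (fun _ => A))^[m] p) ((TprojT α (fun θ => A * (1 + F θ)))^[m] p)
      ≤ m * (π / 2 * a ^ 5 * f) := by
  rcases Nat.eq_zero_or_pos m with rfl | hm
  · simp
  have hdetG : ∀ θ, (A * (1 + F θ)).det = 1 := fun θ => by rw [det_mul, hA, hF, one_mul]
  have hGA : ∀ θ, ‖A * (1 + F θ) - A‖ ≤ a * f := fun θ => by
    rw [mul_add, mul_one, add_sub_cancel_left]
    exact (norm_mul_le _ _).trans (mul_le_mul (by simpa using hAa 1 hm) (hFf θ) (norm_nonneg _)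
      ((norm_nonneg _).trans (hAa 0 (Nat.zero_le m))))
  rw [Prod.dist_eq, TprojT_iterate_fst, TprojT_iterate_fst, dist_self, max_eq_right dist_nonneg,
    TprojT_iterate_snd _ (by simp [hA]), TprojT_iterate_snd _ (by simp [hdetG]), orderedProd_const]
  calc _ ≤ m * (π / 2 * a ^ 4 * (a * f)) :=
        dist_projAct_pow_orderedProd_le hA (fun j => hdetG _) hAa (fun j => hGA _)
          (by linarith) p.2
    _ = m * (π / 2 * a ^ 5 * f) := by ring

section RotationParabolic

theorem norm_le_of_forall_toEuclideanLin_le {M : M2R} {c : ℝ} (hc : 0 ≤ c)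
    (h : ∀ v, ‖toEuclideanLin M v‖ ≤ c * ‖v‖) : ‖M‖ ≤ c :=
  ContinuousLinearMap.opNorm_le_bound _ hc h

theorem det_rotM (ϱ : ℝ) : (rotM ϱ).det = 1 := by
  simp [rotM, det_fin_two_of, ← sq]

theorem norm_rotM_le (ϱ : ℝ) : ‖rotM ϱ‖ ≤ 1 := by
  refine norm_le_of_forall_toEuclideanLin_le zero_le_one fun v => le_of_eq ?_
  rw [one_mul, ← sq_eq_sq₀ (norm_nonneg _) (norm_nonneg _), norm_sq_fin_two, norm_sq_fin_two]
  simp only [toEuclideanLin_apply_fin_two, rotM, of_apply, cons_val', cons_val_zero,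
    cons_val_one, empty_val', cons_val_fin_one]
  linear_combination (v 0 ^ 2 + v 1 ^ 2) * sin_sq_add_cos_sq (2 * π * ϱ)

theorem det_parabM (c : ℝ) : (parabM c).det = 1 := by
  simp [parabM, det_fin_two_of]

theorem parabM_pow (c : ℝ) (k : ℕ) : parabM c ^ k = parabM (k * c) := by
  induction k with
  | zero => simp [parabM, one_fin_two]
  | succ k ih =>
    rw [pow_succ, ih, parabM, parabM, parabM, mul_fin_two]
    simp only [mul_one, mul_zero, add_zero, one_mul]
    push_cast
    ring_nf

theorem norm_parabM_le (c : ℝ) : ‖parabM c‖ ≤ 1 + |c| := by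
  have hnil : ‖(!![0, 1; 0, 0] : M2R)‖ ≤ 1 := by
    refine norm_le_of_forall_toEuclideanLin_le zero_le_one fun v => ?_
    rw [one_mul, ← sq_le_sq₀ (norm_nonneg _) (norm_nonneg _), norm_sq_fin_two, norm_sq_fin_two]
    simp [toEuclideanLin_apply_fin_two]
    positivity
  have hdecomp : parabM c = 1 + c • !![0, 1; 0, 0] := by
    ext i j
    fin_cases i <;> fin_cases j <;> simp [parabM]
  calc ‖parabM c‖ ≤ ‖(1 : M2R)‖ + |c| * ‖(!![0, 1; 0, 0] : M2R)‖ := by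
        rw [hdecomp, ← Real.norm_eq_abs, ← norm_smul]
        exact norm_add_le _ _
    _ ≤ 1 + |c| := by
        rw [norm_one]
        nlinarith [abs_nonneg c]

theorem abs_le_norm_parabM (c : ℝ) : |c| ≤ ‖parabM c‖ := by
  simpa [parabM] using abs_apply_le_norm (parabM c) 0 1

theorem det_eq_one_of_rotM_or_parabM {A : M2R}
    (hA : (∃ ϱ : ℝ, A = rotM ϱ) ∨ (∃ c : ℝ, |c| ≤ 1 ∧ A = parabM c)) : A.det = 1 := by
  rcases hA with ⟨ϱ, rfl⟩ | ⟨c, -, rfl⟩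
  exacts [det_rotM ϱ, det_parabM c]

theorem exists_norm_pow_le_of_rotM_or_parabM {A : M2R}
    (hA : (∃ ϱ : ℝ, A = rotM ϱ) ∨ (∃ c : ℝ, |c| ≤ 1 ∧ A = parabM c)) {m : ℕ} (hm : 1 ≤ m) :
    ∃ a : ℝ, (∀ k ≤ m, ‖A ^ k‖ ≤ a) ∧ a ≤ 2 * m ∧ a ≤ 2 * ‖A ^ m‖ := by
  have hAm : 1 ≤ ‖A ^ m‖ := one_le_norm_of_det_eq_one
    (by rw [det_pow, det_eq_one_of_rotM_or_parabM hA, one_pow])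
  have hm' : (1 : ℝ) ≤ m := by exact_mod_cast hm
  rcases hA with ⟨ϱ, rfl⟩ | ⟨c, hc, rfl⟩
  · refine ⟨1, fun k _ => ?_, by linarith, by linarith⟩
    exact (norm_pow_le _ k).trans (pow_le_one₀ (norm_nonneg _) (norm_rotM_le ϱ))
  · have hmc : m * |c| ≤ ‖parabM c ^ m‖ := by
      simpa [parabM_pow, abs_mul] using abs_le_norm_parabM (m * c)
    refine ⟨1 + m * |c|, fun k hk => ?_, by nlinarith [abs_nonneg c], by linarith⟩
    have hk' : (k : ℝ) ≤ m := by exact_mod_cast hk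
    calc ‖parabM c ^ k‖ ≤ 1 + |k * c| := by rw [parabM_pow]; exact norm_parabM_le _
      _ ≤ 1 + m * |c| := by rw [abs_mul, Nat.abs_cast]; gcongr

end RotationParabolic


theorem norm_le_normC0T {F : T1 → M2R} (hF : Continuous F) (θ : T1) : ‖F θ‖ ≤ normC0T F :=
  le_ciSup (isCompact_range hF.norm).bddAbove θ

/-- Comparison of the iterated projective actions of a
constant (rotation or parabolic) cocycle `A` and its perturbation
`Ã = A(I + F)`: for `64 m³ ‖F‖_{C⁰} ≤ 1`,
`d(T_{(α,A)}^m(θ,φ), T_{(α,Ã)}^m(θ,φ)) ≤ 16 C* m³ ‖A^m‖⁴ ‖F‖_{C⁰}`. -/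
theorem projective_action_iterates_perturbation :
    ∃ Cs : ℝ, 1 ≤ Cs ∧
      ∀ (α : ℝ), Irrational α →
      ∀ Am : M2R, ((∃ ϱ : ℝ, Am = rotM ϱ) ∨ (∃ cst : ℝ, |cst| ≤ 1 ∧ Am = parabM cst)) →
      ∀ F : T1 → M2R, Continuous F → (∀ θ : T1, (1 + F θ).det = 1) →
      ∀ m : ℕ, 64 * (m:ℝ)^3 * normC0T F ≤ 1 →
      ∀ p : T1 × RP1,
        dist ((TprojT ((α : ℝ) : T1) (fun _ => Am))^[m] p)
             ((TprojT ((α : ℝ) : T1) (fun θ => Am * (1 + F θ)))^[m] p)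
          ≤ 16 * Cs * (m:ℝ)^3 * opNorm (Am ^ m) ^ 4 * normC0T F := by
  refine ⟨4, by norm_num, fun α _ A hA F hF hFdet m hm p => ?_⟩
  rcases Nat.eq_zero_or_pos m with rfl | hm1
  · simp
  obtain ⟨a, hAa, ham, haN⟩ := exists_norm_pow_le_of_rotM_or_parabM hA hm1
  set f := normC0T F
  have hf : 0 ≤ f := (norm_nonneg _).trans (norm_le_normC0T hF 0)
  have ha : 0 ≤ a := (norm_nonneg _).trans (hAa 0 (Nat.zero_le m))
  have hm1' : (1 : ℝ) ≤ m := by exact_mod_cast hm1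
  have hsmall : 2 * a ^ 2 * f * m ≤ 1 := by
    have : 2 * a ^ 2 * f * m ≤ 2 * (2 * m) ^ 2 * f * m := by gcongr
    nlinarith
  calc _ ≤ m * (π / 2 * a ^ 5 * f) :=
        dist_TprojT_iterate_le (det_eq_one_of_rotM_or_parabM hA) hFdet hAa
          (norm_le_normC0T hF) hsmall _ p
    _ ≤ m * (2 * (2 * m * (2 * ‖A ^ m‖) ^ 4) * f) := by
        gcongr
        · linarith [pi_le_four]
        · rw [pow_succ']; gcongr
    _ = 64 * m ^ 2 * ‖A ^ m‖ ^ 4 * f := by ring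
    _ ≤ 16 * 4 * m ^ 3 * ‖A ^ m‖ ^ 4 * f := by
        rw [show (16 : ℝ) * 4 = 64 by norm_num]
        gcongr
        norm_num

end Paper

end
end
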